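/- arXiv:1001.1797 — 2 statements merged into one kernel-verified Lean document; each statement's English description precedes it below -/
import Mathlib

section
/- The surgery formula (SF) of the dot-free sl(2) foam theory holds for the TQFT structure maps: for every x ∈ A, x = (1/2)·ε_C(m(Δ_C(x)))·1 + (1/2)·ε_C(x)·m(Δ_C(1)); equivalently, id_A = (1/2)·ι_C ∘ (ε_C ∘ m ∘ Δ_C) + (1/2)·(m ∘ Δ_C ∘ ι_C) ∘ ε_C, where ι_C : R → A is the unit map. -/
/-!
Both sides are `R`-linear in `x`, and `A` is spanned by the powers of `X`, which the relation
`X² = h·X + a` keeps inside `R·1 + R·X`; so it suffices to check `x = 1` and `x = X`.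
There `m (Δ_C 1) = 2X - h` and `m (Δ_C X) = hX + 2a`, and both identities are immediate.
-/

open TensorProduct Polynomial

noncomputable section

variable {R : Type*} [CommRing R]

/-- The algebra `A = R[X]/(X² - h·X - a)`. -/
abbrev FrobA (a h : R) : Type _ := AdjoinRoot (X ^ 2 - C h * X - C a)

/-- The image of the variable `X` in `A`. -/
abbrev FrobX (a h : R) : FrobA a h := AdjoinRoot.root _

theorem frobX_mul_self (a h : R) : FrobX a h * FrobX a h = h • FrobX a h + a • 1 := by
  have hroot := AdjoinRoot.mk_self (f := (X ^ 2 - C h * X - C a : R[X]))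
  simp only [map_sub, map_mul, map_pow, AdjoinRoot.mk_X, AdjoinRoot.mk_C,
    ← AdjoinRoot.algebraMap_eq] at hroot
  rw [Algebra.smul_def, Algebra.smul_def, mul_one]
  linear_combination hroot

theorem frobPoly_monic (a h : R) : (X ^ 2 - C h * X - C a : R[X]).Monic := by
  monicity!

theorem LinearMap.apply_pow_eq_of_mul_self_eq {S M : Type*} [Semiring S] [Algebra R S]
    [AddCommMonoid M] [Module R M] {x : S} {h a : R} (hx : x * x = h • x + a • 1)
    {f g : S →ₗ[R] M} (h1 : f 1 = g 1) (hfx : f x = g x) (n : ℕ) : f (x ^ n) = g (x ^ n) := by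
  induction n using Nat.twoStepInduction with
  | zero => simpa using h1
  | one => simpa using hfx
  | more n ih ih' =>
    have hpow : x ^ (n + 2) = h • x ^ (n + 1) + a • x ^ n := by
      rw [pow_add, sq, hx, mul_add, mul_smul_comm, mul_smul_comm, ← pow_succ, mul_one]
    simp only [hpow, map_add, map_smul, ih, ih']

theorem FrobA.linearMap_ext {a h : R} {M : Type*} [AddCommMonoid M] [Module R M]
    {f g : FrobA a h →ₗ[R] M} (h1 : f 1 = g 1) (hX : f (FrobX a h) = g (FrobX a h)) : f = g :=
  (AdjoinRoot.powerBasis' (frobPoly_monic a h)).basis.ext fun i => by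
    simpa [PowerBasis.coe_basis] using
      LinearMap.apply_pow_eq_of_mul_self_eq (frobX_mul_self a h) h1 hX i

/-- the surgery formula (SF):
`x = (1/2)·ε_C(m(Δ_C(x)))·1 + (1/2)·ε_C(x)·m(Δ_C(1))` for every `x ∈ A`. -/
theorem surgery_formula (a h : R) [Invertible (2 : R)]
    (ΔC : FrobA a h →ₗ[R] FrobA a h ⊗[R] FrobA a h)
    (hΔ1 : ΔC 1 = (1 : FrobA a h) ⊗ₜ[R] FrobX a h + FrobX a h ⊗ₜ[R] (1 : FrobA a h)
      - h • ((1 : FrobA a h) ⊗ₜ[R] (1 : FrobA a h)))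
    (hΔX : ΔC (FrobX a h) = FrobX a h ⊗ₜ[R] FrobX a h
      + a • ((1 : FrobA a h) ⊗ₜ[R] (1 : FrobA a h)))
    (εC : FrobA a h →ₗ[R] R)
    (hε1 : εC 1 = 0) (hεX : εC (FrobX a h) = 1) :
    ∀ x : FrobA a h,
      x = (⅟(2 : R) * εC (LinearMap.mul' R (FrobA a h) (ΔC x))) • (1 : FrobA a h)
        + (⅟(2 : R) * εC x) • LinearMap.mul' R (FrobA a h) (ΔC 1) := by
  set m := LinearMap.mul' R (FrobA a h)
  have hm1 : m (ΔC 1) = (2 : R) • FrobX a h - h • 1 := by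
    simp [m, hΔ1, two_smul]
  have hmX : m (ΔC (FrobX a h)) = h • FrobX a h + (2 * a) • 1 := by
    simp [m, hΔX, frobX_mul_self, two_mul, add_smul, add_assoc]
  have hsurgery : LinearMap.id =
      (⅟(2 : R) • (εC ∘ₗ m ∘ₗ ΔC)).smulRight 1 + (⅟(2 : R) • εC).smulRight (m (ΔC 1)) := by
    refine FrobA.linearMap_ext ?_ ?_
    · simp [hm1, hε1, hεX]
    · simp only [LinearMap.id_coe, id_eq, LinearMap.add_apply, LinearMap.coe_smulRight,
        LinearMap.smul_apply, LinearMap.coe_comp, Function.comp_apply, hmX, hm1, map_add,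
        map_smul, hε1, hεX, smul_eq_mul, mul_one, mul_zero, add_zero]
      rw [smul_sub, smul_smul, smul_smul, invOf_mul_self, one_smul]
      abel
  intro x
  simpa [mul_smul] using LinearMap.congr_fun hsurgery x
end
end

section
/- The R-linear map α_W : A → R × R defined by α_W(x) = (ε_W(x), (1/2)·ε_W(m(Δ_C(x))) + (h/2)·ε_W(x)) and the R-linear map β_W : R × R → A defined by β_W(r, s) = r·((i/2)·m(Δ_C(1)) − (i·h/2)·1) + s·(i·1) are mutually inverse: β_W ∘ α_W = id_A and α_W ∘ β_W = id_{R × R}; in particular α_W realizes an isomorphism of R-modules A ≅ R ⊕ R. -/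
open TensorProduct Polynomial

noncomputable section

variable {R : Type*} [CommRing R]

/-! As the quadratic is monic, `A` is free on `1, X`; since `X² = hX + a`, `m ∘ Δ_C` sends `1 ↦ 2X - h`
and `X ↦ hX + 2a`. Hence `α_W 1 = (0, -i)`, `α_W X = (-i, -ih)` and
`β_W (r, s) = ri·X + (si - rih)·1`, and checking `β_W ∘ α_W` on the basis and `α_W ∘ β_W` on
a general `(r, s)` reduces to `i² = -1`. -/

theorem AdjoinRoot.linearMap_ext_of_monic {g : R[X]} (hg : g.Monic) {M : Type*}
    [AddCommGroup M] [Module R M] {f f' : AdjoinRoot g →ₗ[R] M}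
    (h : ∀ k < g.natDegree, f (root g ^ k) = f' (root g ^ k)) : f = f' :=
  (powerBasis' hg).basis.ext fun i => by
    simpa [PowerBasis.coe_basis] using h i i.is_lt

namespace FrobA

variable {a h : R}

theorem linearMap_ext_s17 {M : Type*} [AddCommGroup M] [Module R M] {f f' : FrobA a h →ₗ[R] M}
    (h1 : f 1 = f' 1) (hX : f (FrobX a h) = f' (FrobX a h)) : f = f' :=
  AdjoinRoot.linearMap_ext_of_monic (by monicity!) fun k hk => by
    have hk2 : k < 2 := hk.trans_le (by compute_degree)
    interval_cases k <;> simpa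

theorem frobX_mul_self : FrobX a h * FrobX a h = h • FrobX a h + a • (1 : FrobA a h) := by
  have := AdjoinRoot.eval₂_root (X ^ 2 - C h * X - C a)
  simp only [eval₂_sub, eval₂_mul, eval₂_pow, eval₂_X, eval₂_C] at this
  simp only [Algebra.smul_def, AdjoinRoot.algebraMap_eq, mul_one]
  linear_combination this

theorem mul'_one_tmul_frobX_add_frobX_tmul_one_sub :
    LinearMap.mul' R (FrobA a h) ((1 : FrobA a h) ⊗ₜ[R] FrobX a h + FrobX a h ⊗ₜ[R] 1
      - h • ((1 : FrobA a h) ⊗ₜ[R] 1)) = (2 : R) • FrobX a h - h • 1 := by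
  simp only [map_sub, map_add, map_smul, LinearMap.mul'_apply, one_mul, mul_one, two_smul]

theorem mul'_frobX_tmul_frobX_add :
    LinearMap.mul' R (FrobA a h) (FrobX a h ⊗ₜ[R] FrobX a h + a • ((1 : FrobA a h) ⊗ₜ[R] 1))
      = h • FrobX a h + (2 * a) • 1 := by
  simp only [map_add, map_smul, LinearMap.mul'_apply, mul_one, frobX_mul_self]
  module

theorem comp_eq_id_and_comp_eq_id_of_apply {i : R} (hi : i ^ 2 = -1)
    {α : FrobA a h →ₗ[R] R × R} {β : R × R →ₗ[R] FrobA a h}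
    (hα1 : α 1 = (0, -i)) (hαX : α (FrobX a h) = (-i, -(i * h)))
    (hβ : ∀ r s : R, β (r, s) = (r * i) • FrobX a h + (s * i - r * i * h) • 1) :
    β ∘ₗ α = LinearMap.id ∧ α ∘ₗ β = LinearMap.id := by
  constructor
  · refine linearMap_ext_s17 ?_ ?_
    · rw [LinearMap.comp_apply, hα1, hβ]
      match_scalars
      · ring
      · linear_combination -hi
    · rw [LinearMap.comp_apply, hαX, hβ]
      match_scalars
      · linear_combination -hi
      · ring
  · refine LinearMap.ext fun ⟨r, s⟩ => ?_
    rw [LinearMap.comp_apply, hβ, map_add, map_smul, map_smul, hα1, hαX]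
    simp only [Prod.smul_mk, Prod.mk_add_mk, smul_eq_mul, LinearMap.id_apply, Prod.mk.injEq]
    constructor
    · linear_combination -r * hi
    · linear_combination -s * hi

end FrobA

/-- `α_W` and `β_W` are mutually inverse, realizing `A ≅ R ⊕ R`. -/
theorem alphaW_iso (a h i : R) [Invertible (2 : R)] (hi : i ^ 2 = -1)
    (ΔC : FrobA a h →ₗ[R] FrobA a h ⊗[R] FrobA a h)
    (hΔ1 : ΔC 1 = (1 : FrobA a h) ⊗ₜ[R] FrobX a h + FrobX a h ⊗ₜ[R] (1 : FrobA a h)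
      - h • ((1 : FrobA a h) ⊗ₜ[R] (1 : FrobA a h)))
    (hΔX : ΔC (FrobX a h) = FrobX a h ⊗ₜ[R] FrobX a h
      + a • ((1 : FrobA a h) ⊗ₜ[R] (1 : FrobA a h)))
    (εW : FrobA a h →ₗ[R] R)
    (hεW1 : εW 1 = 0) (hεWX : εW (FrobX a h) = -i)
    (αW : FrobA a h →ₗ[R] R × R)
    (hα : ∀ x : FrobA a h,
      αW x = (εW x, ⅟(2 : R) * εW (LinearMap.mul' R (FrobA a h) (ΔC x)) + h * ⅟(2 : R) * εW x))
    (βW : R × R →ₗ[R] FrobA a h)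
    (hβ : ∀ r s : R,
      βW (r, s) = r • ((i * ⅟(2 : R)) • LinearMap.mul' R (FrobA a h) (ΔC 1)
        - (i * h * ⅟(2 : R)) • (1 : FrobA a h)) + s • (i • (1 : FrobA a h))) :
    βW ∘ₗ αW = LinearMap.id ∧ αW ∘ₗ βW = LinearMap.id := by
  have h2 : (2 : R) * ⅟2 = 1 := mul_invOf_self 2
  have hα1 : αW 1 = (0, -i) := by
    rw [hα, hΔ1, FrobA.mul'_one_tmul_frobX_add_frobX_tmul_one_sub]
    simp only [map_sub, map_smul, hεW1, hεWX, smul_eq_mul, Prod.mk.injEq, true_and]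
    linear_combination (-i) * h2
  have hαX : αW (FrobX a h) = (-i, -(i * h)) := by
    rw [hα, hΔX, FrobA.mul'_frobX_tmul_frobX_add]
    simp only [map_add, map_smul, hεW1, hεWX, smul_eq_mul, Prod.mk.injEq, true_and]
    linear_combination (-(i * h)) * h2
  have hβ' (r s : R) : βW (r, s) = (r * i) • FrobX a h + (s * i - r * i * h) • 1 := by
    rw [hβ, hΔ1, FrobA.mul'_one_tmul_frobX_add_frobX_tmul_one_sub]
    match_scalars
    · linear_combination (r * i) * h2
    · linear_combination (-(r * i * h)) * h2
  exact FrobA.comp_eq_id_and_comp_eq_id_of_apply hi hα1 hαX hβ'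

end
end
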